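/- Let q, λ ∈ ℂ with |q| < 1, λ ≠ 0, 1 + λ² ≠ 0, and λ²q^k ≠ 1 for all integers k ≥ 1. Define c_k = (−λ²;q²)_k q^{3k} / ((q;q)_k (λ²q;q)_k) for k ≥ 0, and for each integer w ≥ −1 set S(w) = λ^w Σ_{k=0}^∞ c_k q^{kw} (this series converges absolutely). Then for every integer w ≥ 1: S(w) − ((1+λ²)/λ) S(w−1) + S(w−2) = q^{w+1} (S(w) + S(w−2)). -/

import Mathlib

/-!
Write `T(v) = Σ_k c_k q^{kv}`, so that `S(w) = λ^w T(w)`. Multiplying out,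
`λ² T(v+2) - (1 + λ²) T(v+1) + T(v) = Σ_k c_k q^{kv} (1 - q^k)(1 - λ² q^k)`.
The `k = 0` term vanishes, and the first-order recurrence
`c_{k+1} (1 - q^{k+1})(1 - λ² q^{k+1}) = c_k (1 + λ² q^{2k}) q³` turns the shifted sum into
`q^{v+3} (λ² T(v+2) + T(v))`; with `v = w - 2` this is the claim. The same recurrence shows that
the ratio of consecutive terms of `T(v)` tends to `q^{v+3}`, which gives absolute convergence.
-/

/-- The `q`-Pochhammer symbol `(a;q)_k = ∏_{j=0}^{k-1} (1 - a q^j)`. -/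
noncomputable def qPoch (a q : ℂ) (k : ℕ) : ℂ := ∏ j ∈ Finset.range k, (1 - a * q ^ j)

/-- `c_k = (-λ²;q²)_k q^{3k} / ((q;q)_k (λ²q;q)_k)`. -/
noncomputable def cTan (q lam : ℂ) (k : ℕ) : ℂ :=
  qPoch (-lam ^ 2) (q ^ 2) k * q ^ (3 * k) / (qPoch q q k * qPoch (lam ^ 2 * q) q k)

/-- `S(w) = λ^w Σ_{k=0}^∞ c_k q^{kw}`, for integer `w` (in particular `w ≥ -1`). -/
noncomputable def STan (q lam : ℂ) (w : ℤ) : ℂ :=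
  lam ^ w * ∑' k : ℕ, cTan q lam k * q ^ ((k : ℤ) * w)

open Filter Topology

theorem summable_norm_of_norm_succ_le {E : Type*} [SeminormedAddCommGroup E] {f : ℕ → E}
    {r : ℕ → ℝ} {l : ℝ} (hl : l < 1) (hr : Tendsto r atTop (𝓝 l))
    (hf : ∀ k, ‖f (k + 1)‖ ≤ r k * ‖f k‖) : Summable fun k => ‖f k‖ := by
  have hρ : l < (l + 1) / 2 := by linarith
  refine summable_of_ratio_norm_eventually_le (r := (l + 1) / 2) (by linarith) ?_
  filter_upwards [hr.eventually (eventually_lt_nhds hρ)] with k hk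
  simp only [norm_norm]
  exact (hf k).trans (by gcongr)

theorem zpow_natCast_succ_mul {G₀ : Type*} [GroupWithZero G₀] (a : G₀) (k : ℕ) (v : ℤ) :
    a ^ (((k + 1 : ℕ) : ℤ) * v) = a ^ ((k : ℤ) * v) * a ^ v := by
  rw [← zpow_add']
  · congr 1; push_cast; ring
  · rcases eq_or_ne v 0 with rfl | hv
    · simp
    · right; left
      rw [← add_one_mul]
      exact mul_ne_zero (by omega) hv

theorem norm_pow_three_mul_zpow_lt_one {q : ℂ} (hq : ‖q‖ < 1) {v : ℤ} (hv : -2 ≤ v) :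
    ‖q ^ 3 * q ^ v‖ < 1 := by
  obtain ⟨n, hn⟩ := Int.eq_ofNat_of_zero_le (show 0 ≤ v + 2 by omega)
  rw [← zpow_natCast, ← zpow_add' (Or.inr (Or.inl (by omega))),
    show ((3 : ℕ) : ℤ) + v = ((n + 1 : ℕ) : ℤ) by push_cast; omega, zpow_natCast, norm_pow]
  exact pow_lt_one₀ (norm_nonneg q) hq (by omega)

theorem pow_ne_one_of_norm_lt_one {q : ℂ} (hq : ‖q‖ < 1) {j : ℕ} (hj : j ≠ 0) : q ^ j ≠ 1 := by
  intro h
  have := pow_lt_one₀ (norm_nonneg q) hq hj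
  rw [← norm_pow, h, norm_one] at this
  exact this.false

theorem zpow_natCast_mul_add_natCast {G₀ : Type*} [GroupWithZero G₀] {a : G₀} (ha : a ≠ 0)
    (k n : ℕ) (v : ℤ) : a ^ ((k : ℤ) * (v + n)) = a ^ ((k : ℤ) * v) * a ^ (n * k) := by
  rw [mul_add, zpow_add₀ ha, mul_comm (k : ℤ) (n : ℤ), ← Nat.cast_mul, zpow_natCast]

theorem qPoch_succ (a q : ℂ) (k : ℕ) : qPoch a q (k + 1) = qPoch a q k * (1 - a * q ^ k) :=
  Finset.prod_range_succ _ _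

theorem qPoch_ne_zero {a q : ℂ} {k : ℕ} (h : ∀ j < k, a * q ^ j ≠ 1) : qPoch a q k ≠ 0 :=
  Finset.prod_ne_zero_iff.2 fun j hj => sub_ne_zero.2 (h j (Finset.mem_range.1 hj)).symm

theorem cTan_zero (q lam : ℂ) : cTan q lam 0 = 1 := by
  simp [cTan, qPoch]

theorem cTan_zero_left (lam : ℂ) {k : ℕ} (hk : k ≠ 0) : cTan 0 lam k = 0 := by
  simp [cTan, hk]

theorem tendsto_tan_ratio {q : ℂ} (hq : ‖q‖ < 1) (lam c : ℂ) :
    Tendsto (fun k : ℕ => (1 + lam ^ 2 * q ^ (2 * k)) * c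
      / ((1 - q ^ (k + 1)) * (1 - lam ^ 2 * q ^ (k + 1)))) atTop (𝓝 c) := by
  have hpow := tendsto_pow_atTop_nhds_zero_of_norm_lt_one hq
  have h2 : Tendsto (fun k : ℕ => q ^ (2 * k)) atTop (𝓝 0) :=
    hpow.comp (tendsto_id.const_mul_atTop' two_pos)
  have h1 : Tendsto (fun k : ℕ => q ^ (k + 1)) atTop (𝓝 0) := hpow.comp (tendsto_add_atTop_nat 1)
  have hnum : Tendsto (fun k : ℕ => (1 + lam ^ 2 * q ^ (2 * k)) * c) atTop
      (𝓝 ((1 + lam ^ 2 * 0) * c)) :=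
    (tendsto_const_nhds.add (h2.const_mul _)).mul_const c
  have hden : Tendsto (fun k : ℕ => (1 - q ^ (k + 1)) * (1 - lam ^ 2 * q ^ (k + 1))) atTop
      (𝓝 ((1 - 0) * (1 - lam ^ 2 * 0))) :=
    (tendsto_const_nhds.sub h1).mul (tendsto_const_nhds.sub (h1.const_mul _))
  have := hnum.div hden (by simp)
  simp only [mul_zero, add_zero, sub_zero, one_mul, div_one] at this
  exact this

noncomputable def tanSeries (q lam : ℂ) (v : ℤ) : ℂ :=
  ∑' k : ℕ, cTan q lam k * q ^ ((k : ℤ) * v)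

theorem STan_eq (q lam : ℂ) (w : ℤ) : STan q lam w = lam ^ w * tanSeries q lam w := rfl

theorem tanSeries_zero_left (lam : ℂ) (v : ℤ) : tanSeries 0 lam v = 1 := by
  rw [tanSeries, tsum_eq_single 0 fun k hk => by simp [cTan_zero_left lam hk]]
  simp [cTan_zero]

section

variable {q lam : ℂ} (hq : ‖q‖ < 1) (hk : ∀ k : ℕ, 1 ≤ k → lam ^ 2 * q ^ k ≠ 1)
include hq hk

theorem cTan_succ_mul (k : ℕ) :
    cTan q lam (k + 1) * ((1 - q ^ (k + 1)) * (1 - lam ^ 2 * q ^ (k + 1)))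
      = cTan q lam k * ((1 + lam ^ 2 * q ^ (2 * k)) * q ^ 3) := by
  have hq' : ∀ j, q * q ^ j ≠ 1 := fun j => by
    rw [← pow_succ']; exact pow_ne_one_of_norm_lt_one hq (by omega)
  have hk' : ∀ j, lam ^ 2 * q * q ^ j ≠ 1 := fun j => by
    rw [mul_assoc, ← pow_succ']; exact hk _ (by omega)
  have h1 := qPoch_ne_zero fun j (_ : j < k) => hq' j
  have h2 := qPoch_ne_zero fun j (_ : j < k) => hk' j
  have h3 := sub_ne_zero.2 (hq' k).symm
  have h4 := sub_ne_zero.2 (hk' k).symm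
  simp only [cTan, qPoch_succ]
  field_simp
  ring

theorem cTan_mul_zpow_succ_mul (v : ℤ) (k : ℕ) :
    cTan q lam (k + 1) * q ^ (((k + 1 : ℕ) : ℤ) * v)
        * ((1 - q ^ (k + 1)) * (1 - lam ^ 2 * q ^ (k + 1)))
      = cTan q lam k * q ^ ((k : ℤ) * v) * ((1 + lam ^ 2 * q ^ (2 * k)) * (q ^ 3 * q ^ v)) := by
  rw [zpow_natCast_succ_mul]
  linear_combination q ^ ((k : ℤ) * v) * q ^ v * cTan_succ_mul hq hk k

theorem summable_norm_cTan_mul_zpow {v : ℤ} (hv : -2 ≤ v) :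
    Summable fun k : ℕ => ‖cTan q lam k * q ^ ((k : ℤ) * v)‖ := by
  refine summable_norm_of_norm_succ_le (norm_pow_three_mul_zpow_lt_one hq hv)
    (tendsto_tan_ratio hq lam _).norm fun k => le_of_eq ?_
  have hD : (1 - q ^ (k + 1)) * (1 - lam ^ 2 * q ^ (k + 1)) ≠ 0 :=
    mul_ne_zero (sub_ne_zero.2 (pow_ne_one_of_norm_lt_one hq (by omega)).symm)
      (sub_ne_zero.2 (hk _ (by omega)).symm)
  rw [← norm_mul, eq_div_iff hD |>.2 (cTan_mul_zpow_succ_mul hq hk v k)]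
  congr 1
  ring

theorem hasSum_cTan_mul_zpow_shift {v : ℤ} {s : ℂ}
    (h : HasSum (fun k : ℕ => cTan q lam k * q ^ ((k : ℤ) * v)
      * ((1 - q ^ k) * (1 - lam ^ 2 * q ^ k))) s) :
    HasSum (fun k : ℕ => cTan q lam k * q ^ ((k : ℤ) * v)
      * ((1 + lam ^ 2 * q ^ (2 * k)) * (q ^ 3 * q ^ v))) s := by
  have h1 := (hasSum_nat_add_iff' 1).2 h
  simp only [Finset.sum_range_one, pow_zero, sub_self, zero_mul, mul_zero, sub_zero] at h1
  rwa [funext (cTan_mul_zpow_succ_mul hq hk v)] at h1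

theorem tanSeries_recurrence {v : ℤ} (hv : -2 ≤ v) :
    lam ^ 2 * tanSeries q lam (v + 2) - (1 + lam ^ 2) * tanSeries q lam (v + 1)
        + tanSeries q lam v
      = q ^ 3 * q ^ v * (lam ^ 2 * tanSeries q lam (v + 2) + tanSeries q lam v) := by
  -- at `q = 0` the exponent law `q^{k(v+n)} = q^{kv} q^{nk}` fails, but each series is just `1`
  rcases eq_or_ne q 0 with rfl | hq0
  · simp only [tanSeries_zero_left]
    ring
  set a : ℕ → ℂ := fun k => cTan q lam k * q ^ ((k : ℤ) * v)
  have hT : ∀ n : ℕ, HasSum (fun k => a k * q ^ (n * k)) (tanSeries q lam (v + n)) := by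
    intro n
    have := (summable_norm_cTan_mul_zpow hq hk (v := v + n) (by omega)).of_norm.hasSum
    simpa only [tanSeries, zpow_natCast_mul_add_natCast hq0, a, mul_assoc] using this
  have hL := (((hT 2).mul_left (lam ^ 2)).sub ((hT 1).mul_left (1 + lam ^ 2))).add (hT 0)
  have hR := (((hT 2).mul_left (lam ^ 2)).add (hT 0)).mul_left (q ^ 3 * q ^ v)
  simp only [Nat.cast_ofNat, Nat.cast_one, Nat.cast_zero, add_zero] at hL hR
  refine (hasSum_cTan_mul_zpow_shift hq hk (v := v) ?_).unique ?_
  · exact hL.congr_fun fun k => by ring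
  · exact hR.congr_fun fun k => by ring

end

theorem ansatz_qTangent_general (q lam : ℂ) (hq : ‖q‖ < 1) (hlam : lam ≠ 0)
    (hk : ∀ k : ℕ, 1 ≤ k → lam ^ 2 * q ^ k ≠ 1) :
    (∀ w : ℤ, -1 ≤ w → Summable fun k : ℕ => ‖cTan q lam k * q ^ ((k : ℤ) * w)‖) ∧
    ∀ w : ℤ, 1 ≤ w →
      STan q lam w - ((1 + lam ^ 2) / lam) * STan q lam (w - 1) + STan q lam (w - 2)
        = q ^ (w + 1) * (STan q lam w + STan q lam (w - 2)) := by
  refine ⟨fun w hw => summable_norm_cTan_mul_zpow hq hk (by omega), fun w hw => ?_⟩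
  have h := tanSeries_recurrence hq hk (v := w - 2) (by omega)
  rw [sub_add_cancel, show w - 2 + 1 = w - 1 by ring, ← zpow_natCast q 3,
    ← zpow_add' (Or.inr (Or.inl (by omega))), show ((3 : ℕ) : ℤ) + (w - 2) = w + 1 by omega] at h
  have hw : lam ^ w = lam ^ (w - 2) * lam ^ 2 := by
    rw [← zpow_natCast, ← zpow_add₀ hlam]; norm_num
  have hw1 : lam ^ (w - 1) = lam ^ (w - 2) * lam := by
    rw [← zpow_add_one₀ hlam]; ring_nf
  have hdiv : (1 + lam ^ 2) / lam * lam = 1 + lam ^ 2 := div_mul_cancel₀ _ hlam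
  rw [STan_eq, STan_eq, STan_eq, hw, hw1]
  linear_combination lam ^ (w - 2) * h - lam ^ (w - 2) * tanSeries q lam (w - 1) * hdiv

theorem ansatz_qTangent (q lam : ℂ) (hq : ‖q‖ < 1) (hlam : lam ≠ 0)
    (hlam2 : 1 + lam ^ 2 ≠ 0)
    (hk : ∀ k : ℕ, 1 ≤ k → lam ^ 2 * q ^ k ≠ 1) :
    (∀ w : ℤ, -1 ≤ w → Summable fun k : ℕ => ‖cTan q lam k * q ^ ((k : ℤ) * w)‖) ∧
    ∀ w : ℤ, 1 ≤ w →
      STan q lam w - ((1 + lam ^ 2) / lam) * STan q lam (w - 1) + STan q lam (w - 2)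
        = q ^ (w + 1) * (STan q lam w + STan q lam (w - 2)) :=
  ansatz_qTangent_general q lam hq hlam hk
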